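/- arXiv:2310.00998 — 9 statements merged into one kernel-verified Lean document; each statement's English description precedes it below -/
import Mathlib

section
/- If P is reachable and P →a P' via the operational semantics, then P' is reachable. -/
inductive Proc (A : Type) : Type
  | nil : Proc A
  | pre : A → Proc A → Proc A
  | exe : A → Proc A → Proc A
  | choice : Proc A → Proc A → Proc A

inductive Initial {A : Type} : Proc A → Prop
  | nil : Initial .nil
  | pre {a : A} {P : Proc A} : Initial P → Initial (.pre a P)
  | choice {P Q : Proc A} : Initial P → Initial Q → Initial (.choice P Q)

inductive Final {A : Type} : Proc A → Prop
  | nil : Final .nil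
  | exe {a : A} {P : Proc A} : Final P → Final (.exe a P)
  | choiceL {P Q : Proc A} : Final P → Initial Q → Final (.choice P Q)
  | choiceR {P Q : Proc A} : Initial P → Final Q → Final (.choice P Q)

inductive Reachable {A : Type} : Proc A → Prop
  | nil : Reachable .nil
  | pre {a : A} {P : Proc A} : Initial P → Reachable (.pre a P)
  | exe {a : A} {P : Proc A} : Reachable P → Reachable (.exe a P)
  | choiceL {P Q : Proc A} : Reachable P → Initial Q → Reachable (.choice P Q)
  | choiceR {P Q : Proc A} : Initial P → Reachable Q → Reachable (.choice P Q)

inductive Tr {A : Type} : Proc A → A → Proc A → Prop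
  | actf {a : A} {P : Proc A} : Initial P → Tr (.pre a P) a (.exe a P)
  | actp {a b : A} {P P' : Proc A} : Tr P b P' → Tr (.exe a P) b (.exe a P')
  | chol {a : A} {P1 P1' P2 : Proc A} : Tr P1 a P1' → Initial P2 →
      Tr (.choice P1 P2) a (.choice P1' P2)
  | chor {a : A} {P1 P2 P2' : Proc A} : Tr P2 a P2' → Initial P1 →
      Tr (.choice P1 P2) a (.choice P1 P2')

theorem reachable_of_initial {A : Type} {P : Proc A} (h : Initial P) : Reachable P := by
  induction h with
  | nil => exact .nil
  | pre h ih => exact .pre h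
  | choice h1 h2 ih1 ih2 => exact .choiceL ih1 h2

theorem reachable_of_trans {A : Type} {P P' : Proc A} {a : A}
    (hP : Reachable P) (h : Tr P a P') : Reachable P' := by
  induction h with
  | actf h => exact .exe (reachable_of_initial h)
  | actp h ih =>
      cases hP with
      | exe hr => exact .exe (ih hr)
  | chol h h2 ih =>
      cases hP with
      | choiceL h1 _ => exact .choiceL (ih h1) h2
      | choiceR hi h1 => exact .choiceL (ih (reachable_of_initial hi)) h2
  | chor h h1 ih =>
      cases hP with
      | choiceL hr hi => exact .choiceR h1 (ih (reachable_of_initial hi))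
      | choiceR _ hr => exact .choiceR h1 (ih hr)
end

section
/- Every non-initial reachable process has exactly one incoming transition: if reachable(P) and not initial(P), then there exist exactly one pair (a, P') with P' →a P. -/
theorem tr_not_initial {A : Type} {P : Proc A} {a : A} {P' : Proc A}
    (h : Tr P a P') : ¬ Initial P' := by
  induction h with
  | actf => intro h; cases h
  | actp _ ih => intro h; cases h
  | chol _ _ ih => intro h; cases h with | choice h1 h2 => exact ih h1
  | chor _ _ ih => intro h; cases h with | choice h1 h2 => exact ih h2

theorem unique_incoming_transition {A : Type} {P : Proc A}
    (hreach : Reachable P) (hnotinit : ¬ Initial P) :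
    ∃! x : A × Proc A, Tr x.2 x.1 P := by
  revert hnotinit
  induction hreach with
  | nil => intro h; exact absurd Initial.nil h
  | pre hP => intro h; exact absurd (Initial.pre hP) h
  | @exe a P hP ih =>
    intro _
    by_cases hi : Initial P
    · refine ⟨(a, .pre a P), Tr.actf hi, ?_⟩
      rintro ⟨b, Q⟩ hQ
      dsimp only at hQ
      cases hQ with
      | actf => rfl
      | actp h => exact absurd hi (tr_not_initial h)
    · obtain ⟨⟨b, Q⟩, hQ, huniq⟩ := ih hi
      refine ⟨(b, .exe a Q), Tr.actp hQ, ?_⟩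
      rintro ⟨c, R⟩ hR
      dsimp only at hR
      cases hR with
      | actf hi' => exact absurd hi' hi
      | actp h =>
        have h' := huniq (_, _) h
        simp only [Prod.mk.injEq] at h' ⊢
        exact ⟨h'.1, by rw [h'.2]⟩
  | @choiceL P Q hP hQinit ih =>
    intro hni
    have hPni : ¬ Initial P := fun h => hni (Initial.choice h hQinit)
    obtain ⟨⟨b, R⟩, hR, huniq⟩ := ih hPni
    refine ⟨(b, .choice R Q), Tr.chol hR hQinit, ?_⟩
    rintro ⟨c, S⟩ hS
    dsimp only at hS
    cases hS with
    | chol h _ =>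
      have h' := huniq (_, _) h
      simp only [Prod.mk.injEq] at h' ⊢
      exact ⟨h'.1, by rw [h'.2]⟩
    | chor h _ => exact absurd hQinit (tr_not_initial h)
  | @choiceR P Q hPinit hQ ih =>
    intro hni
    have hQni : ¬ Initial Q := fun h => hni (Initial.choice hPinit h)
    obtain ⟨⟨b, R⟩, hR, huniq⟩ := ih hQni
    refine ⟨(b, .choice P R), Tr.chor hR hPinit, ?_⟩
    rintro ⟨c, S⟩ hS
    dsimp only at hS
    cases hS with
    | chol h _ => exact absurd hPinit (tr_not_initial h)
    | chor h _ =>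
      have h' := huniq (_, _) h
      simp only [Prod.mk.injEq] at h' ⊢
      exact ⟨h'.1, by rw [h'.2]⟩
end

section
/- Every reachable process that is not final has at least one outgoing transition. -/
theorem exists_outgoing_transition {A : Type} {P : Proc A}
    (hreach : Reachable P) (hnotfin : ¬ Final P) :
    ∃ (a : A) (P' : Proc A), Tr P a P' := by
  induction hreach with
  | nil => exact absurd Final.nil hnotfin
  | pre h => exact ⟨_, _, Tr.actf h⟩
  | exe _ ih =>
    by_cases hf : Final ‹Proc _›
    all_goals first
    | (obtain ⟨a, P', t⟩ := ih (fun hf => hnotfin (Final.exe hf)); exact ⟨a, _, Tr.actp t⟩)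
  | choiceL _ hQ ih =>
    obtain ⟨a, P', t⟩ := ih (fun hf => hnotfin (Final.choiceL hf hQ))
    exact ⟨a, _, Tr.chol t hQ⟩
  | choiceR hP _ ih =>
    obtain ⟨a, P', t⟩ := ih (fun hf => hnotfin (Final.choiceR hP hf))
    exact ⟨a, _, Tr.chor t hP⟩
end

section
/- Strong forward-reverse bisimilarity is contained in the intersection of strong forward bisimilarity and strong reverse bisimilarity, and the inclusion is strict: the processes a†.0 and a†.0 + c.0 (for a ≠ c) are forward bisimilar and reverse bisimilar but not forward-reverse bisimilar. -/
def IsFwdBisim {A : Type} (B : Proc A → Proc A → Prop) : Prop :=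
  (∀ P Q, B P Q → B Q P) ∧
  (∀ P Q a P', B P Q → Tr P a P' → ∃ Q', Tr Q a Q' ∧ B P' Q')

def IsRevBisim {A : Type} (B : Proc A → Proc A → Prop) : Prop :=
  (∀ P Q, B P Q → B Q P) ∧
  (∀ P Q a P', B P Q → Tr P' a P → ∃ Q', Tr Q' a Q ∧ B P' Q')

def IsFRBisim {A : Type} (B : Proc A → Proc A → Prop) : Prop :=
  (∀ P Q, B P Q → B Q P) ∧
  (∀ P Q a P', B P Q → Tr P a P' → ∃ Q', Tr Q a Q' ∧ B P' Q') ∧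
  (∀ P Q a P', B P Q → Tr P' a P → ∃ Q', Tr Q' a Q ∧ B P' Q')

def FB {A : Type} (P Q : Proc A) : Prop := ∃ B, IsFwdBisim B ∧ B P Q

def RB {A : Type} (P Q : Proc A) : Prop := ∃ B, IsRevBisim B ∧ B P Q

def FRB {A : Type} (P Q : Proc A) : Prop := ∃ B, IsFRBisim B ∧ B P Q

def FBps {A : Type} (P Q : Proc A) : Prop :=
  ∃ B, IsFwdBisim B ∧ (∀ P' Q', B P' Q' → (Initial P' ↔ Initial Q')) ∧ B P Q


lemma no_tr_exe_a_nil {A : Type} {a b : A} {R : Proc A} :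
    ¬ Tr (Proc.exe a Proc.nil) b R := by
  intro h; cases h with
  | actp h => cases h

lemma no_tr_Q {A : Type} {a c b : A} {R : Proc A} :
    ¬ Tr (Proc.choice (Proc.exe a Proc.nil) (Proc.pre c Proc.nil)) b R := by
  intro h; cases h with
  | chol h _ => exact no_tr_exe_a_nil h
  | chor _ h => cases h

lemma tr_into_exe {A : Type} {a b : A} {P' : Proc A}
    (h : Tr P' b (Proc.exe a Proc.nil)) : P' = Proc.pre a Proc.nil ∧ b = a := by
  cases h with
  | actf _ => exact ⟨rfl, rfl⟩
  | actp h => cases h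

lemma no_tr_into_pre {A : Type} {b d : A} {P' R : Proc A}
    (h : Tr P' b (Proc.pre d R)) : False := by cases h

lemma no_tr_into_prepre {A : Type} {a c b : A} {P' : Proc A}
    (h : Tr P' b (Proc.choice (Proc.pre a Proc.nil) (Proc.pre c Proc.nil))) : False := by
  cases h with
  | chol h _ => exact no_tr_into_pre h
  | chor h _ => exact no_tr_into_pre h

theorem frb_subset_fb_inter_rb_strict {A : Type} (a c : A) (hac : a ≠ c) :
    (∀ P Q : Proc A, FRB P Q → FB P Q ∧ RB P Q) ∧
    FB (Proc.exe a Proc.nil) (Proc.choice (Proc.exe a Proc.nil) (Proc.pre c Proc.nil)) ∧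
    RB (Proc.exe a Proc.nil) (Proc.choice (Proc.exe a Proc.nil) (Proc.pre c Proc.nil)) ∧
    ¬ FRB (Proc.exe a Proc.nil) (Proc.choice (Proc.exe a Proc.nil) (Proc.pre c Proc.nil)) := by
  refine ⟨?_, ?_, ?_, ?_⟩
  · rintro X Y ⟨B, ⟨hsym, hfwd, hrev⟩, hB⟩
    exact ⟨⟨B, ⟨hsym, hfwd⟩, hB⟩, ⟨B, ⟨hsym, hrev⟩, hB⟩⟩
  · refine ⟨fun X Y =>
      (X = Proc.exe a Proc.nil ∧ Y = Proc.choice (Proc.exe a Proc.nil) (Proc.pre c Proc.nil)) ∨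
      (X = Proc.choice (Proc.exe a Proc.nil) (Proc.pre c Proc.nil) ∧ Y = Proc.exe a Proc.nil),
      ⟨?_, ?_⟩, Or.inl ⟨rfl, rfl⟩⟩
    · rintro X Y (⟨rfl, rfl⟩ | ⟨rfl, rfl⟩)
      · exact Or.inr ⟨rfl, rfl⟩
      · exact Or.inl ⟨rfl, rfl⟩
    · rintro X Y b X' (⟨rfl, rfl⟩ | ⟨rfl, rfl⟩) h
      · exact absurd h no_tr_exe_a_nil
      · exact absurd h no_tr_Q
  · refine ⟨fun X Y =>
      (X = Proc.exe a Proc.nil ∧ Y = Proc.choice (Proc.exe a Proc.nil) (Proc.pre c Proc.nil)) ∨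
      (X = Proc.choice (Proc.exe a Proc.nil) (Proc.pre c Proc.nil) ∧ Y = Proc.exe a Proc.nil) ∨
      (X = Proc.pre a Proc.nil ∧ Y = Proc.choice (Proc.pre a Proc.nil) (Proc.pre c Proc.nil)) ∨
      (X = Proc.choice (Proc.pre a Proc.nil) (Proc.pre c Proc.nil) ∧ Y = Proc.pre a Proc.nil),
      ⟨?_, ?_⟩, Or.inl ⟨rfl, rfl⟩⟩
    · rintro X Y (⟨rfl, rfl⟩ | ⟨rfl, rfl⟩ | ⟨rfl, rfl⟩ | ⟨rfl, rfl⟩)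
      · exact Or.inr (Or.inl ⟨rfl, rfl⟩)
      · exact Or.inl ⟨rfl, rfl⟩
      · exact Or.inr (Or.inr (Or.inr ⟨rfl, rfl⟩))
      · exact Or.inr (Or.inr (Or.inl ⟨rfl, rfl⟩))
    · rintro X Y b X' (⟨rfl, rfl⟩ | ⟨rfl, rfl⟩ | ⟨rfl, rfl⟩ | ⟨rfl, rfl⟩) h
      · obtain ⟨rfl, hba⟩ := tr_into_exe h
        rw [hba]
        exact ⟨Proc.choice (Proc.pre a Proc.nil) (Proc.pre c Proc.nil),
          Tr.chol (Tr.actf Initial.nil) (Initial.pre Initial.nil),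
          Or.inr (Or.inr (Or.inl ⟨rfl, rfl⟩))⟩
      · cases h with
        | chol h hi =>
          obtain ⟨rfl, hba⟩ := tr_into_exe h
          rw [hba]
          exact ⟨Proc.pre a Proc.nil, Tr.actf Initial.nil,
            Or.inr (Or.inr (Or.inr ⟨rfl, rfl⟩))⟩
        | chor h _ => exact absurd h no_tr_into_pre
      · exact absurd h no_tr_into_pre
      · exact absurd h no_tr_into_prepre
  · rintro ⟨B, ⟨hsym, hfwd, hrev⟩, hB⟩
    have htr : Tr (Proc.pre a Proc.nil) a (Proc.exe a Proc.nil) := Tr.actf Initial.nil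
    obtain ⟨Q', hQ', hB'⟩ := hrev _ _ a (Proc.pre a Proc.nil) hB htr
    have hQ'eq : Q' = Proc.choice (Proc.pre a Proc.nil) (Proc.pre c Proc.nil) := by
      cases hQ' with
      | chol h _ => rw [(tr_into_exe h).1]
      | chor h _ => exact absurd h no_tr_into_pre
    subst hQ'eq
    have htr2 : Tr (Proc.choice (Proc.pre a Proc.nil) (Proc.pre c Proc.nil)) c
        (Proc.choice (Proc.pre a Proc.nil) (Proc.exe c Proc.nil)) :=
      Tr.chor (Tr.actf Initial.nil) (Initial.pre Initial.nil)
    obtain ⟨R, hR, _⟩ := hfwd _ _ c _ (hsym _ _ hB') htr2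
    cases hR with
    | actf _ => exact hac rfl
end

section
/- Strong past-sensitive forward bisimilarity identifies non-initial processes with different pasts: for any actions a1, a2 and any process P, a1†.P ~FB:ps a2†.P. -/
theorem fbps_ignores_past {A : Type} (a1 a2 : A) (P : Proc A) :
    FBps (Proc.exe a1 P) (Proc.exe a2 P) := by
  refine ⟨fun X Y => ∃ b1 b2 Q, X = Proc.exe b1 Q ∧ Y = Proc.exe b2 Q, ⟨?_, ?_⟩, ?_, ⟨a1, a2, P, rfl, rfl⟩⟩
  · rintro X Y ⟨b1, b2, Q, rfl, rfl⟩; exact ⟨b2, b1, Q, rfl, rfl⟩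
  · rintro X Y a P' ⟨b1, b2, Q, rfl, rfl⟩ h
    cases h with
    | actp h => exact ⟨_, Tr.actp h, b1, b2, _, rfl, rfl⟩
  · rintro X Y ⟨b1, b2, Q, rfl, rfl⟩
    constructor <;> (intro h; cases h)
end

section
/- Strong reverse bisimilarity coincides with strong reverse trace equivalence: P1 ~RB P2 if and only if P1 and P2 have the same sets of backward traces (sequences of actions labelling paths ending in P1 resp. P2, read backwards). -/
/-- `BwdTrace P l` : `l` is a backward trace of `P`, i.e. the sequence of actions
labelling a path ending in `P`, read backwards (most recently executed action first). -/
inductive BwdTrace {A : Type} : Proc A → List A → Prop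
  | refl {P : Proc A} : BwdTrace P []
  | step {P Q : Proc A} {a : A} {l : List A} :
      Tr Q a P → BwdTrace Q l → BwdTrace P (a :: l)


lemma tr_not_init {A : Type} {Q : Proc A} {a : A} {P : Proc A} (h : Tr Q a P) :
    ¬ Initial P := by
  induction h with
  | actf => intro h; cases h
  | actp => intro h; cases h
  | chol _ _ ih => intro h; cases h; exact ih ‹_›
  | chor _ _ ih => intro h; cases h; exact ih ‹_›

lemma tr_det {A : Type} {P Q Q' : Proc A} {a b : A} (h : Tr Q a P) (h' : Tr Q' b P) :
    Q = Q' ∧ a = b := by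
  induction h generalizing Q' b with
  | actf hI =>
    cases h' with
    | actf => exact ⟨rfl, rfl⟩
    | actp ht => exact absurd hI (tr_not_init ht)
  | actp ht ih =>
    cases h' with
    | actf hI => exact absurd hI (tr_not_init ht)
    | actp ht' => obtain ⟨h1, h2⟩ := ih ht'; exact ⟨by rw [h1], h2⟩
  | chol ht hI ih =>
    cases h' with
    | chol ht' _ => obtain ⟨h1, h2⟩ := ih ht'; exact ⟨by rw [h1], h2⟩
    | chor ht' hI' => exact absurd hI' (tr_not_init ht)
  | chor ht hI ih =>
    cases h' with
    | chol ht' hI' => exact absurd hI' (tr_not_init ht)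
    | chor ht' _ => obtain ⟨h1, h2⟩ := ih ht'; exact ⟨by rw [h1], h2⟩

lemma rb_trace_incl {A : Type} {B : Proc A → Proc A → Prop} (hB : IsRevBisim B) :
    ∀ {P : Proc A} {l : List A}, BwdTrace P l → ∀ {Q : Proc A}, B P Q → BwdTrace Q l := by
  intro P l h
  induction h with
  | refl => intro Q _; exact .refl
  | step ht _ ih =>
    intro Q hPQ
    obtain ⟨Q', htQ, hB'⟩ := hB.2 _ _ _ _ hPQ ht
    exact .step htQ (ih hB')

theorem rb_eq_reverse_trace_equivalence {A : Type} (P1 P2 : Proc A) :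
    RB P1 P2 ↔ ∀ l : List A, BwdTrace P1 l ↔ BwdTrace P2 l := by
  constructor
  · rintro ⟨B, hB, hP⟩ l
    exact ⟨fun h => rb_trace_incl hB h hP, fun h => rb_trace_incl hB h (hB.1 _ _ hP)⟩
  · intro h
    refine ⟨fun P Q => ∀ l : List A, BwdTrace P l ↔ BwdTrace Q l, ⟨?_, ?_⟩, h⟩
    · intro P Q hPQ l; exact (hPQ l).symm
    · intro P Q a P' hPQ ht
      have hQ : BwdTrace Q [a] := (hPQ [a]).1 (.step ht .refl)
      cases hQ with
      | step htQ _ =>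
        rename_i Q' _
        refine ⟨Q', htQ, fun l => ⟨?_, ?_⟩⟩
        · intro hl
          have := (hPQ (a :: l)).1 (.step ht hl)
          cases this with
          | step htQ' hl' =>
            obtain ⟨h1, _⟩ := tr_det htQ' htQ
            exact h1 ▸ hl'
        · intro hl
          have := (hPQ (a :: l)).2 (.step htQ hl)
          cases this with
          | step htP' hl' =>
            obtain ⟨h1, _⟩ := tr_det htP' ht
            exact h1 ▸ hl'
end

section
/- Logical characterization of strong forward-reverse bisimilarity: P1 ~FRB P2 if and only if P1 and P2 satisfy the same formulas of the logic L_FRB with syntax φ ::= true | ¬φ | φ∧φ | ⟨a⟩φ | ⟨a†⟩φ, where ⟨a⟩ is the forward modality and ⟨a†⟩ the backward modality. -/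
inductive FormFRB (A : Type) : Type
  | tt : FormFRB A
  | neg : FormFRB A → FormFRB A
  | conj : FormFRB A → FormFRB A → FormFRB A
  | diam : A → FormFRB A → FormFRB A
  | diamB : A → FormFRB A → FormFRB A

def SatFRB {A : Type} : Proc A → FormFRB A → Prop
  | _, FormFRB.tt => True
  | P, FormFRB.neg φ => ¬ SatFRB P φ
  | P, FormFRB.conj φ ψ => SatFRB P φ ∧ SatFRB P ψ
  | P, FormFRB.diam a φ => ∃ P', Tr P a P' ∧ SatFRB P' φ
  | P, FormFRB.diamB a φ => ∃ P', Tr P' a P ∧ SatFRB P' φ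


/-!
Soundness is the usual induction on formulas. For completeness, logical equivalence is itself a
forward-reverse bisimulation. Forward, this is the Hennessy–Milner argument: a process has only
finitely many `a`-successors, so if none of them were equivalent to `P'`, the conjunction of
finitely many distinguishing formulas `φ` would give `⟨a⟩φ` true at `P` and false at `Q`.
Backward no finiteness is needed: a process has at most one incoming transition, so `⟨a†⟩φ` holds
at the target exactly when `φ` holds at the (unique) source.
-/

namespace Tr

variable {A : Type}

theorem not_initial {P P' : Proc A} {a : A} (h : Tr P a P') : ¬ Initial P' := by
  induction h with
  | actf _ | actp _ _ => rintro ⟨⟩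
  | chol _ _ ih => intro h; cases h with | choice hP _ => exact ih hP
  | chor _ _ ih => intro h; cases h with | choice _ hQ => exact ih hQ

theorem label_eq_and_source_eq {P Q R : Proc A} {a b : A} (h₁ : Tr P a R) (h₂ : Tr Q b R) :
    a = b ∧ P = Q := by
  induction h₁ generalizing Q b with
  | actf hP =>
    cases h₂ with
    | actf _ => exact ⟨rfl, rfl⟩
    | actp h => exact absurd hP h.not_initial
  | actp h ih =>
    cases h₂ with
    | actf hI => exact absurd hI h.not_initial
    | actp h' => obtain ⟨rfl, rfl⟩ := ih h'; exact ⟨rfl, rfl⟩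
  | chol h _ ih =>
    cases h₂ with
    | chol h' _ => obtain ⟨rfl, rfl⟩ := ih h'; exact ⟨rfl, rfl⟩
    | chor _ hI => exact absurd hI h.not_initial
  | chor h _ ih =>
    cases h₂ with
    | chol _ hI => exact absurd hI h.not_initial
    | chor h' _ => obtain ⟨rfl, rfl⟩ := ih h'; exact ⟨rfl, rfl⟩

theorem finite_setOf (P : Proc A) (a : A) : {P' | Tr P a P'}.Finite := by
  induction P with
  | nil => exact Set.finite_empty.subset (by rintro _ ⟨⟩)
  | pre b P => exact (Set.finite_singleton (Proc.exe b P)).subset (by rintro _ ⟨⟩; rfl)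
  | exe b P ih =>
    refine (ih.image (Proc.exe b)).subset ?_
    intro _ h
    cases h with | actp h => exact ⟨_, h, rfl⟩
  | choice P Q ihP ihQ =>
    refine ((ihP.image (Proc.choice · Q)).union (ihQ.image (Proc.choice P))).subset ?_
    intro _ h
    cases h with
    | chol h _ => exact Or.inl ⟨_, h, rfl⟩
    | chor h _ => exact Or.inr ⟨_, h, rfl⟩

end Tr

section Logic

variable {A : Type}

def LogEquiv (P Q : Proc A) : Prop := ∀ φ : FormFRB A, SatFRB P φ ↔ SatFRB Q φ

theorem LogEquiv.symm {P Q : Proc A} (h : LogEquiv P Q) : LogEquiv Q P := fun φ => (h φ).symm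

theorem exists_satFRB_not_satFRB_of_not_logEquiv {P Q : Proc A} (h : ¬ LogEquiv P Q) :
    ∃ φ, SatFRB P φ ∧ ¬ SatFRB Q φ := by
  obtain ⟨φ, hφ⟩ := not_forall.mp h
  by_cases hPφ : SatFRB P φ
  · exact ⟨φ, hPφ, fun hQφ => hφ (iff_of_true hPφ hQφ)⟩
  · exact ⟨.neg φ, hPφ, fun hQφ => hφ (iff_of_false hPφ hQφ)⟩

theorem satFRB_diamB_iff_of_tr {P P' : Proc A} {a : A} (h : Tr P' a P) (φ : FormFRB A) :
    SatFRB P (.diamB a φ) ↔ SatFRB P' φ :=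
  ⟨fun ⟨_, h', hφ⟩ => (h'.label_eq_and_source_eq h).2 ▸ hφ, fun hφ => ⟨P', h, hφ⟩⟩

theorem exists_satFRB_forall_not_satFRB {P : Proc A} (s : Finset (Proc A))
    (hs : ∀ Q ∈ s, ¬ LogEquiv P Q) : ∃ φ, SatFRB P φ ∧ ∀ Q ∈ s, ¬ SatFRB Q φ := by
  induction s using Finset.cons_induction with
  | empty => exact ⟨.tt, trivial, by simp⟩
  | cons Q s _ ih =>
    obtain ⟨φ, hPφ, hsφ⟩ := ih fun R hR => hs R (Finset.mem_cons_of_mem hR)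
    obtain ⟨ψ, hPψ, hQψ⟩ :=
      exists_satFRB_not_satFRB_of_not_logEquiv (hs Q (Finset.mem_cons_self Q s))
    refine ⟨.conj φ ψ, ⟨hPφ, hPψ⟩, ?_⟩
    rintro R hR ⟨hRφ, hRψ⟩
    rcases Finset.mem_cons.mp hR with rfl | hR
    exacts [hQψ hRψ, hsφ R hR hRφ]

theorem IsFRBisim.satFRB_of_satFRB {B : Proc A → Proc A → Prop} (hB : IsFRBisim B)
    (φ : FormFRB A) {P Q : Proc A} (hPQ : B P Q) (hP : SatFRB P φ) : SatFRB Q φ := by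
  obtain ⟨hsymm, hfwd, hbwd⟩ := hB
  induction φ generalizing P Q with
  | tt => trivial
  | neg φ ih => exact fun hQ => hP (ih (hsymm P Q hPQ) hQ)
  | conj φ ψ ihφ ihψ => exact ⟨ihφ hPQ hP.1, ihψ hPQ hP.2⟩
  | diam a φ ih =>
    obtain ⟨P', hPP', hP'⟩ := hP
    obtain ⟨Q', hQQ', hPQ'⟩ := hfwd P Q a P' hPQ hPP'
    exact ⟨Q', hQQ', ih hPQ' hP'⟩
  | diamB a φ ih =>
    obtain ⟨P', hPP', hP'⟩ := hP
    obtain ⟨Q', hQQ', hPQ'⟩ := hbwd P Q a P' hPQ hPP'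
    exact ⟨Q', hQQ', ih hPQ' hP'⟩

theorem IsFRBisim.logEquiv {B : Proc A → Proc A → Prop} (hB : IsFRBisim B) {P Q : Proc A}
    (hPQ : B P Q) : LogEquiv P Q := fun φ =>
  ⟨hB.satFRB_of_satFRB φ hPQ, hB.satFRB_of_satFRB φ (hB.1 P Q hPQ)⟩

theorem LogEquiv.exists_tr_of_tr {P Q P' : Proc A} {a : A} (hPQ : LogEquiv P Q)
    (hP : Tr P a P') : ∃ Q', Tr Q a Q' ∧ LogEquiv P' Q' := by
  by_contra! hQ
  have hfin := Tr.finite_setOf Q a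
  obtain ⟨φ, hP'φ, hsuccφ⟩ := exists_satFRB_forall_not_satFRB (P := P') hfin.toFinset
    fun Q' hQ' => hQ Q' (hfin.mem_toFinset.mp hQ')
  obtain ⟨Q', hQQ', hQ'φ⟩ := (hPQ (.diam a φ)).mp ⟨P', hP, hP'φ⟩
  exact hsuccφ Q' (hfin.mem_toFinset.mpr hQQ') hQ'φ

theorem LogEquiv.exists_tr_of_tr_rev {P Q P' : Proc A} {a : A} (hPQ : LogEquiv P Q)
    (hP : Tr P' a P) : ∃ Q', Tr Q' a Q ∧ LogEquiv P' Q' := by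
  obtain ⟨Q', hQ, -⟩ := (hPQ (.diamB a .tt)).mp ⟨P', hP, trivial⟩
  refine ⟨Q', hQ, fun φ => ?_⟩
  calc SatFRB P' φ ↔ SatFRB P (.diamB a φ) := (satFRB_diamB_iff_of_tr hP φ).symm
    _ ↔ SatFRB Q (.diamB a φ) := hPQ _
    _ ↔ SatFRB Q' φ := satFRB_diamB_iff_of_tr hQ φ

theorem isFRBisim_logEquiv : IsFRBisim (LogEquiv (A := A)) :=
  ⟨fun _ _ => LogEquiv.symm, fun _ _ _ _ => LogEquiv.exists_tr_of_tr,
    fun _ _ _ _ => LogEquiv.exists_tr_of_tr_rev⟩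

end Logic

theorem frb_logical_characterization {A : Type} (P1 P2 : Proc A) :
    FRB P1 P2 ↔ ∀ φ : FormFRB A, SatFRB P1 φ ↔ SatFRB P2 φ :=
  ⟨fun ⟨_, hB, hPQ⟩ => hB.logEquiv hPQ, fun h => ⟨LogEquiv, isFRBisim_logEquiv, h⟩⟩
end

section
/- Weak forward-reverse bisimilarity satisfies the cross property: if P1 ≈FRB P2, P1' and P1'' are reachable from P1 with P1' ⇒τ* P1'', P2' and P2'' are reachable from P2 with P2' ⇒τ* P2'', P1' ≈FRB P2'' and P1'' ≈FRB P2', then P1'' ≈FRB P2''. -/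
def TauStar {A : Type} (τ : A) : Proc A → Proc A → Prop :=
  Relation.ReflTransGen (fun p q => Tr p τ q)

def WeakStep {A : Type} (τ a : A) (P Q : Proc A) : Prop :=
  ∃ P1 P2, TauStar τ P P1 ∧ Tr P1 a P2 ∧ TauStar τ P2 Q

def IsWeakFwdBisim {A : Type} (τ : A) (B : Proc A → Proc A → Prop) : Prop :=
  (∀ P Q, B P Q → B Q P) ∧
  (∀ P Q P', B P Q → Tr P τ P' → ∃ Q', TauStar τ Q Q' ∧ B P' Q') ∧
  (∀ P Q a P', B P Q → Tr P a P' → a ≠ τ → ∃ Q', WeakStep τ a Q Q' ∧ B P' Q')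

def IsWeakFRBisim {A : Type} (τ : A) (B : Proc A → Proc A → Prop) : Prop :=
  (∀ P Q, B P Q → B Q P) ∧
  (∀ P Q P', B P Q → Tr P τ P' → ∃ Q', TauStar τ Q Q' ∧ B P' Q') ∧
  (∀ P Q a P', B P Q → Tr P a P' → a ≠ τ → ∃ Q', WeakStep τ a Q Q' ∧ B P' Q') ∧
  (∀ P Q P', B P Q → Tr P' τ P → ∃ Q', TauStar τ Q' Q ∧ B P' Q') ∧
  (∀ P Q a P', B P Q → Tr P' a P → a ≠ τ → ∃ Q', WeakStep τ a Q' Q ∧ B P' Q')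

def WFB {A : Type} (τ : A) (P Q : Proc A) : Prop := ∃ B, IsWeakFwdBisim τ B ∧ B P Q

def WFRB {A : Type} (τ : A) (P Q : Proc A) : Prop := ∃ B, IsWeakFRBisim τ B ∧ B P Q

def IsBranchingBisim {A : Type} (τ : A) (B : Proc A → Proc A → Prop) : Prop :=
  (∀ P Q, B P Q → B Q P) ∧
  (∀ P Q a P', B P Q → Tr P a P' →
    (a = τ ∧ B P' Q) ∨
    ∃ Q1 Q', TauStar τ Q Q1 ∧ Tr Q1 a Q' ∧ B P Q1 ∧ B P' Q')

def BB {A : Type} (τ : A) (P Q : Proc A) : Prop := ∃ B, IsBranchingBisim τ B ∧ B P Q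

def ReachFrom {A : Type} : Proc A → Proc A → Prop :=
  Relation.ReflTransGen (fun p q => ∃ a, Tr p a q)

section WfrbAux
variable {A : Type} {τ : A}

theorem wfrb_symm' {P Q : Proc A} (h : WFRB τ P Q) : WFRB τ Q P := by
  obtain ⟨B, hB, hPQ⟩ := h; exact ⟨B, hB, hB.1 _ _ hPQ⟩

theorem wfrb_fwd_tau {P Q P' : Proc A} (h : WFRB τ P Q) (ht : Tr P τ P') :
    ∃ Q', TauStar τ Q Q' ∧ WFRB τ P' Q' := by
  obtain ⟨B, hB, hPQ⟩ := h
  obtain ⟨Q', hs, hb⟩ := hB.2.1 _ _ _ hPQ ht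
  exact ⟨Q', hs, B, hB, hb⟩

theorem wfrb_fwd_a {P Q P' : Proc A} {a : A} (h : WFRB τ P Q) (ht : Tr P a P')
    (hne : a ≠ τ) : ∃ Q', WeakStep τ a Q Q' ∧ WFRB τ P' Q' := by
  obtain ⟨B, hB, hPQ⟩ := h
  obtain ⟨Q', hs, hb⟩ := hB.2.2.1 _ _ _ _ hPQ ht hne
  exact ⟨Q', hs, B, hB, hb⟩

theorem wfrb_bwd_tau {P Q P' : Proc A} (h : WFRB τ P Q) (ht : Tr P' τ P) :
    ∃ Q', TauStar τ Q' Q ∧ WFRB τ P' Q' := by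
  obtain ⟨B, hB, hPQ⟩ := h
  obtain ⟨Q', hs, hb⟩ := hB.2.2.2.1 _ _ _ hPQ ht
  exact ⟨Q', hs, B, hB, hb⟩

theorem wfrb_bwd_a {P Q P' : Proc A} {a : A} (h : WFRB τ P Q) (ht : Tr P' a P)
    (hne : a ≠ τ) : ∃ Q', WeakStep τ a Q' Q ∧ WFRB τ P' Q' := by
  obtain ⟨B, hB, hPQ⟩ := h
  obtain ⟨Q', hs, hb⟩ := hB.2.2.2.2 _ _ _ _ hPQ ht hne
  exact ⟨Q', hs, B, hB, hb⟩

theorem wfrb_taustar {P Q P' : Proc A} (h : WFRB τ P Q) (ht : TauStar τ P P') :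
    ∃ Q', TauStar τ Q Q' ∧ WFRB τ P' Q' := by
  induction ht with
  | refl => exact ⟨Q, Relation.ReflTransGen.refl, h⟩
  | tail hab hbc ih =>
    obtain ⟨Q1, hs1, hb1⟩ := ih
    obtain ⟨Q2, hs2, hb2⟩ := wfrb_fwd_tau hb1 hbc
    exact ⟨Q2, Relation.ReflTransGen.trans hs1 hs2, hb2⟩

theorem weakstep_prepend {a : A} {P0 P Q : Proc A} (hs : TauStar τ P0 P)
    (hw : WeakStep τ a P Q) : WeakStep τ a P0 Q := by
  obtain ⟨R1, R2, w1, w2, w3⟩ := hw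
  exact ⟨R1, R2, Relation.ReflTransGen.trans hs w1, w2, w3⟩

theorem weakstep_append {a : A} {P Q Q1 : Proc A} (hw : WeakStep τ a P Q)
    (hs : TauStar τ Q Q1) : WeakStep τ a P Q1 := by
  obtain ⟨R1, R2, w1, w2, w3⟩ := hw
  exact ⟨R1, R2, w1, w2, Relation.ReflTransGen.trans w3 hs⟩

end WfrbAux

theorem wfrb_cross {A : Type} (τ : A) {P1 P2 P1' P1'' P2' P2'' : Proc A}
    (h : WFRB τ P1 P2)
    (h1' : ReachFrom P1 P1') (h1'' : ReachFrom P1 P1'') (h1 : TauStar τ P1' P1'')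
    (h2' : ReachFrom P2 P2') (h2'' : ReachFrom P2 P2'') (h2 : TauStar τ P2' P2'')
    (hx : WFRB τ P1' P2'') (hy : WFRB τ P1'' P2') :
    WFRB τ P1'' P2'' := by
  clear h h1' h1'' h2' h2''
  refine ⟨fun p q => WFRB τ p q ∨ (p = P1'' ∧ q = P2'') ∨ (p = P2'' ∧ q = P1''),
    ⟨?_, ?_, ?_, ?_, ?_⟩, Or.inr (Or.inl ⟨rfl, rfl⟩)⟩
  · rintro P Q (hb | ⟨rfl, rfl⟩ | ⟨rfl, rfl⟩)
    · exact Or.inl (wfrb_symm' hb)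
    · exact Or.inr (Or.inr ⟨rfl, rfl⟩)
    · exact Or.inr (Or.inl ⟨rfl, rfl⟩)
  · rintro P Q P' (hb | ⟨rfl, rfl⟩ | ⟨rfl, rfl⟩) ht
    · obtain ⟨Q', hs, hb'⟩ := wfrb_fwd_tau hb ht
      exact ⟨Q', hs, Or.inl hb'⟩
    · obtain ⟨Q', hs, hb'⟩ := wfrb_taustar hx (Relation.ReflTransGen.tail h1 ht)
      exact ⟨Q', hs, Or.inl hb'⟩
    · obtain ⟨Q', hs, hb'⟩ := wfrb_taustar (wfrb_symm' hy) (Relation.ReflTransGen.tail h2 ht)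
      exact ⟨Q', hs, Or.inl hb'⟩
  · rintro P Q a P' (hb | ⟨rfl, rfl⟩ | ⟨rfl, rfl⟩) ht hne
    · obtain ⟨Q', hs, hb'⟩ := wfrb_fwd_a hb ht hne
      exact ⟨Q', hs, Or.inl hb'⟩
    · obtain ⟨Q0, hs0, hb0⟩ := wfrb_taustar hx h1
      obtain ⟨Q', hw, hb'⟩ := wfrb_fwd_a hb0 ht hne
      exact ⟨Q', weakstep_prepend hs0 hw, Or.inl hb'⟩
    · obtain ⟨Q0, hs0, hb0⟩ := wfrb_taustar (wfrb_symm' hy) h2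
      obtain ⟨Q', hw, hb'⟩ := wfrb_fwd_a hb0 ht hne
      exact ⟨Q', weakstep_prepend hs0 hw, Or.inl hb'⟩
  · rintro P Q P' (hb | ⟨rfl, rfl⟩ | ⟨rfl, rfl⟩) ht
    · obtain ⟨Q', hs, hb'⟩ := wfrb_bwd_tau hb ht
      exact ⟨Q', hs, Or.inl hb'⟩
    · obtain ⟨Q', hs, hb'⟩ := wfrb_bwd_tau hy ht
      exact ⟨Q', Relation.ReflTransGen.trans hs h2, Or.inl hb'⟩
    · obtain ⟨Q', hs, hb'⟩ := wfrb_bwd_tau (wfrb_symm' hx) ht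
      exact ⟨Q', Relation.ReflTransGen.trans hs h1, Or.inl hb'⟩
  · rintro P Q a P' (hb | ⟨rfl, rfl⟩ | ⟨rfl, rfl⟩) ht hne
    · obtain ⟨Q', hs, hb'⟩ := wfrb_bwd_a hb ht hne
      exact ⟨Q', hs, Or.inl hb'⟩
    · obtain ⟨Q', hw, hb'⟩ := wfrb_bwd_a hy ht hne
      exact ⟨Q', weakstep_append hw h2, Or.inl hb'⟩
    · obtain ⟨Q', hw, hb'⟩ := wfrb_bwd_a (wfrb_symm' hx) ht hne
      exact ⟨Q', weakstep_append hw h1, Or.inl hb'⟩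
end

section
/- The processes τ.a.0 + a.0 + b.0 and τ.a.0 + b.0 (with a, b, τ pairwise distinct) are weakly forward bisimilar but not weakly forward-reverse bisimilar. -/
section Aux
variable {A : Type}

lemma tr_from_nil {x : A} {R : Proc A} : ¬ Tr Proc.nil x R := fun h => by cases h
lemma tr_to_nil {X : Proc A} {x : A} : ¬ Tr X x Proc.nil := fun h => by cases h
lemma tr_to_pre {X R : Proc A} {x c : A} : ¬ Tr X x (Proc.pre c R) := fun h => by cases h
lemma not_initial_exe {c : A} {P : Proc A} : ¬ Initial (Proc.exe c P) := fun h => by cases h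

lemma tr_pre_inv {c x : A} {P R : Proc A} (h : Tr (Proc.pre c P) x R) :
    c = x ∧ R = Proc.exe c P ∧ Initial P := by cases h; exact ⟨rfl, rfl, by assumption⟩

lemma tr_exe_inv {c x : A} {P R : Proc A} (h : Tr (Proc.exe c P) x R) :
    ∃ P', Tr P x P' ∧ R = Proc.exe c P' := by cases h; exact ⟨_, by assumption, rfl⟩

lemma tr_choice_inv {x : A} {P Q R : Proc A} (h : Tr (Proc.choice P Q) x R) :
    (∃ P', Tr P x P' ∧ Initial Q ∧ R = Proc.choice P' Q) ∨
    (∃ Q', Tr Q x Q' ∧ Initial P ∧ R = Proc.choice P Q') := by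
  cases h
  · exact Or.inl ⟨_, by assumption, by assumption, rfl⟩
  · exact Or.inr ⟨_, by assumption, by assumption, rfl⟩

lemma tr_to_exe_inv {x c : A} {X R : Proc A} (h : Tr X x (Proc.exe c R)) :
    (X = Proc.pre c R ∧ x = c ∧ Initial R) ∨ (∃ P, X = Proc.exe c P ∧ Tr P x R) := by
  cases h
  · exact Or.inl ⟨rfl, rfl, by assumption⟩
  · exact Or.inr ⟨_, rfl, by assumption⟩

lemma tr_to_choice_inv {x : A} {X R1 R2 : Proc A} (h : Tr X x (Proc.choice R1 R2)) :
    (∃ P1, X = Proc.choice P1 R2 ∧ Tr P1 x R1 ∧ Initial R2) ∨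
    (∃ P2, X = Proc.choice R1 P2 ∧ Tr P2 x R2 ∧ Initial R1) := by
  cases h
  · exact Or.inl ⟨_, rfl, by assumption, by assumption⟩
  · exact Or.inr ⟨_, rfl, by assumption, by assumption⟩

end Aux

section Ex
variable {A : Type}

abbrev pA (a : A) : Proc A := .pre a .nil
abbrev eA (a : A) : Proc A := .exe a .nil
abbrev pP (τ a b : A) : Proc A := .choice (.choice (.pre τ (pA a)) (pA a)) (pA b)
abbrev pQ (τ a b : A) : Proc A := .choice (.pre τ (pA a)) (pA b)
abbrev pP1 (τ a b : A) : Proc A := .choice (.choice (.exe τ (pA a)) (pA a)) (pA b)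
abbrev pQ1 (τ a b : A) : Proc A := .choice (.exe τ (pA a)) (pA b)
abbrev pP1a (τ a b : A) : Proc A := .choice (.choice (.exe τ (eA a)) (pA a)) (pA b)
abbrev pQ1a (τ a b : A) : Proc A := .choice (.exe τ (eA a)) (pA b)
abbrev pP2 (τ a b : A) : Proc A := .choice (.choice (.pre τ (pA a)) (eA a)) (pA b)
abbrev pP3 (τ a b : A) : Proc A := .choice (.choice (.pre τ (pA a)) (pA a)) (eA b)
abbrev pQ3 (τ a b : A) : Proc A := .choice (.pre τ (pA a)) (eA b)

lemma init_pA {a : A} : Initial (pA a) := .pre .nil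

lemma initial_choice_inv {P Q : Proc A} (h : Initial (Proc.choice P Q)) :
    Initial P ∧ Initial Q := by cases h; exact ⟨by assumption, by assumption⟩

variable {τ a b : A}

-- forward transition inversions
lemma trP_inv {x : A} {R : Proc A} (h : Tr (pP τ a b) x R) :
    (x = τ ∧ R = pP1 τ a b) ∨ (x = a ∧ R = pP2 τ a b) ∨ (x = b ∧ R = pP3 τ a b) := by
  rcases tr_choice_inv h with ⟨P', h', hi, rfl⟩ | ⟨Q', h', hi, rfl⟩
  · rcases tr_choice_inv h' with ⟨P'', h'', hi2, rfl⟩ | ⟨Q'', h'', hi2, rfl⟩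
    · obtain ⟨rfl, rfl, -⟩ := tr_pre_inv h''
      exact Or.inl ⟨rfl, rfl⟩
    · obtain ⟨rfl, rfl, -⟩ := tr_pre_inv h''
      exact Or.inr (Or.inl ⟨rfl, rfl⟩)
  · obtain ⟨rfl, rfl, -⟩ := tr_pre_inv h'
    exact Or.inr (Or.inr ⟨rfl, rfl⟩)

lemma trQ_inv {x : A} {R : Proc A} (h : Tr (pQ τ a b) x R) :
    (x = τ ∧ R = pQ1 τ a b) ∨ (x = b ∧ R = pQ3 τ a b) := by
  rcases tr_choice_inv h with ⟨P', h', hi, rfl⟩ | ⟨Q', h', hi, rfl⟩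
  · obtain ⟨rfl, rfl, -⟩ := tr_pre_inv h'
    exact Or.inl ⟨rfl, rfl⟩
  · obtain ⟨rfl, rfl, -⟩ := tr_pre_inv h'
    exact Or.inr ⟨rfl, rfl⟩

lemma trP1_inv {x : A} {R : Proc A} (h : Tr (pP1 τ a b) x R) :
    x = a ∧ R = pP1a τ a b := by
  rcases tr_choice_inv h with ⟨P', h', hi, rfl⟩ | ⟨Q', h', hi, rfl⟩
  · rcases tr_choice_inv h' with ⟨P'', h'', hi2, rfl⟩ | ⟨Q'', h'', hi2, rfl⟩
    · obtain ⟨P3, h3, rfl⟩ := tr_exe_inv h''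
      obtain ⟨rfl, rfl, -⟩ := tr_pre_inv h3
      exact ⟨rfl, rfl⟩
    · exact absurd hi2 not_initial_exe
  · exact absurd (initial_choice_inv hi).1 not_initial_exe

lemma trQ1_inv {x : A} {R : Proc A} (h : Tr (pQ1 τ a b) x R) :
    x = a ∧ R = pQ1a τ a b := by
  rcases tr_choice_inv h with ⟨P', h', hi, rfl⟩ | ⟨Q', h', hi, rfl⟩
  · obtain ⟨P3, h3, rfl⟩ := tr_exe_inv h'
    obtain ⟨rfl, rfl, -⟩ := tr_pre_inv h3
    exact ⟨rfl, rfl⟩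
  · exact absurd hi not_initial_exe

lemma trP1a_dead {x : A} {R : Proc A} : ¬ Tr (pP1a τ a b) x R := by
  intro h
  rcases tr_choice_inv h with ⟨P', h', hi, rfl⟩ | ⟨Q', h', hi, rfl⟩
  · rcases tr_choice_inv h' with ⟨P'', h'', hi2, rfl⟩ | ⟨Q'', h'', hi2, rfl⟩
    · obtain ⟨P3, h3, rfl⟩ := tr_exe_inv h''
      obtain ⟨P4, h4, rfl⟩ := tr_exe_inv h3
      exact tr_from_nil h4
    · exact absurd hi2 not_initial_exe
  · exact absurd (initial_choice_inv hi).1 not_initial_exe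

lemma trQ1a_dead {x : A} {R : Proc A} : ¬ Tr (pQ1a τ a b) x R := by
  intro h
  rcases tr_choice_inv h with ⟨P', h', hi, rfl⟩ | ⟨Q', h', hi, rfl⟩
  · obtain ⟨P3, h3, rfl⟩ := tr_exe_inv h'
    obtain ⟨P4, h4, rfl⟩ := tr_exe_inv h3
    exact tr_from_nil h4
  · exact absurd hi not_initial_exe

lemma trP2_dead {x : A} {R : Proc A} : ¬ Tr (pP2 τ a b) x R := by
  intro h
  rcases tr_choice_inv h with ⟨P', h', hi, rfl⟩ | ⟨Q', h', hi, rfl⟩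
  · rcases tr_choice_inv h' with ⟨P'', h'', hi2, rfl⟩ | ⟨Q'', h'', hi2, rfl⟩
    · exact absurd hi2 not_initial_exe
    · obtain ⟨P3, h3, rfl⟩ := tr_exe_inv h''
      exact tr_from_nil h3
  · exact absurd (initial_choice_inv hi).2 not_initial_exe

lemma trP3_dead {x : A} {R : Proc A} : ¬ Tr (pP3 τ a b) x R := by
  intro h
  rcases tr_choice_inv h with ⟨P', h', hi, rfl⟩ | ⟨Q', h', hi, rfl⟩
  · exact absurd hi not_initial_exe
  · obtain ⟨P3, h3, rfl⟩ := tr_exe_inv h'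
    exact tr_from_nil h3

lemma trQ3_dead {x : A} {R : Proc A} : ¬ Tr (pQ3 τ a b) x R := by
  intro h
  rcases tr_choice_inv h with ⟨P', h', hi, rfl⟩ | ⟨Q', h', hi, rfl⟩
  · exact absurd hi not_initial_exe
  · obtain ⟨P3, h3, rfl⟩ := tr_exe_inv h'
    exact tr_from_nil h3

-- concrete transitions
lemma trP_tau : Tr (pP τ a b) τ (pP1 τ a b) := .chol (.chol (.actf init_pA) init_pA) init_pA
lemma trP_a : Tr (pP τ a b) a (pP2 τ a b) := .chol (.chor (.actf .nil) (.pre init_pA)) init_pA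
lemma trP_b : Tr (pP τ a b) b (pP3 τ a b) := .chor (.actf .nil) (.choice (.pre init_pA) init_pA)
lemma trP1_a : Tr (pP1 τ a b) a (pP1a τ a b) := .chol (.chol (.actp (.actf .nil)) init_pA) init_pA
lemma trQ_tau : Tr (pQ τ a b) τ (pQ1 τ a b) := .chol (.actf init_pA) init_pA
lemma trQ_b : Tr (pQ τ a b) b (pQ3 τ a b) := .chor (.actf .nil) (.pre init_pA)
lemma trQ1_a : Tr (pQ1 τ a b) a (pQ1a τ a b) := .chol (.actp (.actf .nil)) init_pA

lemma ws_single {x : A} {P Q : Proc A} (h : Tr P x Q) : WeakStep τ x P Q :=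
  ⟨P, Q, .refl, h, .refl⟩

-- TauStar forward characterizations
lemma taustar_from_Q1 (hat : a ≠ τ) {Z : Proc A} (h : TauStar τ (pQ1 τ a b) Z) :
    Z = pQ1 τ a b := by
  rcases h.cases_head with heq | ⟨c, hc, -⟩
  · exact heq.symm
  · obtain ⟨ha, -⟩ := trQ1_inv hc
    exact absurd ha.symm hat

lemma taustar_from_Q (hat : a ≠ τ) (hbt : b ≠ τ) {Z : Proc A}
    (h : TauStar τ (pQ τ a b) Z) : Z = pQ τ a b ∨ Z = pQ1 τ a b := by
  rcases h.cases_head with heq | ⟨c, hc, hrest⟩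
  · exact Or.inl heq.symm
  · rcases trQ_inv hc with ⟨-, rfl⟩ | ⟨hb, -⟩
    · exact Or.inr (taustar_from_Q1 hat hrest)
    · exact absurd hb.symm hbt

lemma taustar_from_Q1a {Z : Proc A} (h : TauStar τ (pQ1a τ a b) Z) : Z = pQ1a τ a b := by
  rcases h.cases_head with heq | ⟨c, hc, -⟩
  · exact heq.symm
  · exact absurd hc trQ1a_dead

-- incoming characterizations
lemma no_tr_in_P {X : Proc A} {x : A} : ¬ Tr X x (pP τ a b) := by
  intro h
  rcases tr_to_choice_inv h with ⟨P1, -, h1, -⟩ | ⟨P2, -, h2, -⟩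
  · rcases tr_to_choice_inv h1 with ⟨Y, -, h3, -⟩ | ⟨Y, -, h3, -⟩ <;> exact tr_to_pre h3
  · exact tr_to_pre h2

lemma tr_in_P2 {X : Proc A} {x : A} (h : Tr X x (pP2 τ a b)) :
    x = a ∧ X = pP τ a b := by
  rcases tr_to_choice_inv h with ⟨P1, rfl, h1, -⟩ | ⟨P2, -, h2, -⟩
  · rcases tr_to_choice_inv h1 with ⟨Y, -, h3, -⟩ | ⟨Y, rfl, h3, -⟩
    · exact absurd h3 tr_to_pre
    · rcases tr_to_exe_inv h3 with ⟨rfl, rfl, -⟩ | ⟨Z, -, h4⟩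
      · exact ⟨rfl, rfl⟩
      · exact absurd h4 tr_to_nil
  · exact absurd h2 tr_to_pre

lemma taustar_in_P {Z : Proc A} (h : TauStar τ Z (pP τ a b)) : Z = pP τ a b := by
  rcases h.cases_tail with heq | ⟨c, -, hc⟩
  · exact heq.symm
  · exact absurd hc no_tr_in_P

lemma taustar_in_P2 (hat : a ≠ τ) {Z : Proc A} (h : TauStar τ Z (pP2 τ a b)) :
    Z = pP2 τ a b := by
  rcases h.cases_tail with heq | ⟨c, -, hc⟩
  · exact heq.symm
  · obtain ⟨ha, -⟩ := tr_in_P2 hc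
    exact absurd ha hat.symm

-- the forward bisimulation
def S0 (τ a b : A) (x y : Proc A) : Prop :=
  (x = pP τ a b ∧ y = pQ τ a b) ∨ (x = pP1 τ a b ∧ y = pQ1 τ a b) ∨
  (x = pP1a τ a b ∧ y = pQ1a τ a b) ∨ (x = pP2 τ a b ∧ y = pQ1a τ a b) ∨
  (x = pP3 τ a b ∧ y = pQ3 τ a b)

def Bf (τ a b : A) (x y : Proc A) : Prop := S0 τ a b x y ∨ S0 τ a b y x

lemma iswfb (hat : a ≠ τ) (hbt : b ≠ τ) : IsWeakFwdBisim τ (Bf τ a b) := by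
  refine ⟨fun P Q h => h.symm, ?_, ?_⟩
  · rintro P Q P' (h | h) htr <;>
      rcases h with ⟨rfl, rfl⟩ | ⟨rfl, rfl⟩ | ⟨rfl, rfl⟩ | ⟨rfl, rfl⟩ | ⟨rfl, rfl⟩
    · rcases trP_inv htr with ⟨-, rfl⟩ | ⟨h, -⟩ | ⟨h, -⟩
      · exact ⟨pQ1 τ a b, .single trQ_tau, Or.inl (Or.inr (Or.inl ⟨rfl, rfl⟩))⟩
      · exact absurd h.symm hat
      · exact absurd h.symm hbt
    · obtain ⟨h, -⟩ := trP1_inv htr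
      exact absurd h.symm hat
    · exact absurd htr trP1a_dead
    · exact absurd htr trP2_dead
    · exact absurd htr trP3_dead
    · rcases trQ_inv htr with ⟨-, rfl⟩ | ⟨h, -⟩
      · exact ⟨pP1 τ a b, .single trP_tau, Or.inr (Or.inr (Or.inl ⟨rfl, rfl⟩))⟩
      · exact absurd h.symm hbt
    · obtain ⟨h, -⟩ := trQ1_inv htr
      exact absurd h.symm hat
    · exact absurd htr trQ1a_dead
    · exact absurd htr trQ1a_dead
    · exact absurd htr trQ3_dead
  · rintro P Q x P' (h | h) htr hxt <;>
      rcases h with ⟨rfl, rfl⟩ | ⟨rfl, rfl⟩ | ⟨rfl, rfl⟩ | ⟨rfl, rfl⟩ | ⟨rfl, rfl⟩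
    · rcases trP_inv htr with ⟨rfl, -⟩ | ⟨rfl, rfl⟩ | ⟨rfl, rfl⟩
      · exact absurd rfl hxt
      · exact ⟨_, ⟨_, _, .single trQ_tau, trQ1_a, .refl⟩,
          Or.inl (Or.inr (Or.inr (Or.inr (Or.inl ⟨rfl, rfl⟩))))⟩
      · exact ⟨_, ws_single trQ_b,
          Or.inl (Or.inr (Or.inr (Or.inr (Or.inr ⟨rfl, rfl⟩))))⟩
    · obtain ⟨rfl, rfl⟩ := trP1_inv htr
      exact ⟨_, ws_single trQ1_a, Or.inl (Or.inr (Or.inr (Or.inl ⟨rfl, rfl⟩)))⟩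
    · exact absurd htr trP1a_dead
    · exact absurd htr trP2_dead
    · exact absurd htr trP3_dead
    · rcases trQ_inv htr with ⟨rfl, -⟩ | ⟨rfl, rfl⟩
      · exact absurd rfl hxt
      · exact ⟨_, ws_single trP_b,
          Or.inr (Or.inr (Or.inr (Or.inr (Or.inr ⟨rfl, rfl⟩))))⟩
    · obtain ⟨rfl, rfl⟩ := trQ1_inv htr
      exact ⟨_, ws_single trP1_a, Or.inr (Or.inr (Or.inr (Or.inl ⟨rfl, rfl⟩)))⟩
    · exact absurd htr trQ1a_dead
    · exact absurd htr trQ1a_dead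
    · exact absurd htr trQ3_dead

end Ex

theorem wfb_not_wfrb_example {A : Type} (τ a b : A)
    (hab : a ≠ b) (hat : a ≠ τ) (hbt : b ≠ τ) :
    WFB τ (Proc.choice (Proc.choice (Proc.pre τ (Proc.pre a Proc.nil)) (Proc.pre a Proc.nil))
            (Proc.pre b Proc.nil))
          (Proc.choice (Proc.pre τ (Proc.pre a Proc.nil)) (Proc.pre b Proc.nil)) ∧
    ¬ WFRB τ (Proc.choice (Proc.choice (Proc.pre τ (Proc.pre a Proc.nil)) (Proc.pre a Proc.nil))
            (Proc.pre b Proc.nil))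
          (Proc.choice (Proc.pre τ (Proc.pre a Proc.nil)) (Proc.pre b Proc.nil)) := by
  constructor
  · exact ⟨Bf τ a b, iswfb hat hbt, Or.inl (Or.inl ⟨rfl, rfl⟩)⟩
  · rintro ⟨B, ⟨hsym, -, hf2, -, hb2⟩, hPQ⟩
    -- hPQ : B (pP τ a b) (pQ τ a b)
    obtain ⟨Q', hws, hP2Q'⟩ := hf2 _ _ a _ hPQ trP_a hat
    obtain ⟨Z1, Z2, h1, h2, h3⟩ := hws
    rcases taustar_from_Q hat hbt h1 with rfl | rfl
    · rcases trQ_inv h2 with ⟨h, -⟩ | ⟨h, -⟩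
      · exact hat h
      · exact hab h
    · obtain ⟨-, rfl⟩ := trQ1_inv h2
      obtain rfl := taustar_from_Q1a h3
      -- hP2Q' : B (pP2 τ a b) (pQ1a τ a b)
      obtain ⟨P'', hws2, hQ1P''⟩ := hb2 _ _ a _ (hsym _ _ hP2Q') trQ1_a hat
      obtain ⟨W1, W2, g1, g2, g3⟩ := hws2
      obtain rfl := taustar_in_P2 hat g3
      obtain ⟨-, rfl⟩ := tr_in_P2 g2
      obtain rfl := taustar_in_P g1
      -- hQ1P'' : B (pQ1 τ a b) (pP τ a b)
      obtain ⟨V, hws3, -⟩ := hf2 _ _ b _ (hsym _ _ hQ1P'') trP_b hbt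
      obtain ⟨V1, V2, k1, k2, -⟩ := hws3
      obtain rfl := taustar_from_Q1 hat k1
      obtain ⟨hba, -⟩ := trQ1_inv k2
      exact hab hba.symm
end
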